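/- arXiv:2303.11908 — 2 statements merged into one kernel-verified Lean document; each statement's English description precedes it below -/
import Mathlib

section
/- (Bias of the Blackman–Tukey estimator.) Let M ≤ N be positive integers, let w : ℤ → ℝ satisfy w[k] = w[−k] and w[k] ∈ [0, 1] for all k, let ε > 0, and let M̂ ∈ ℕ satisfy Σ_{|k| ≥ M̂} ‖R[k]‖₂ ≤ ε/2. If M ≥ M̂, N ≥ 2 M̂ ‖R‖₁ / ε, and w[k] ≥ (1 − ε/(2‖R‖₁)) / (1 − |k|/N) for all |k| < M̂, then sup_{s∈[−1/2,1/2]} ‖Φ(s) − Σ_{k=−M+1}^{M−1} e^{−j2πsk} (1 − |k|/N) w[k] R[k]‖₂ ≤ ε. -/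
/-!
Write `c k = (1 - |k|/N) w[k]` for `|k| < M` and `c k = 0` otherwise, so that
`Φ(s)` minus the expected estimate is `Σ_k (1 - c k) e^{-j2πsk} R[k]` with `0 ≤ 1 - c k ≤ 1`.
A unimodular phase and complexification do not increase the spectral norm of `R[k]`, so the lags
`|k| ≥ M̂` contribute at most the tail `Σ_{|k| ≥ M̂} ‖R[k]‖₂ ≤ ε/2`. Every lag `|k| < M̂` lies in
the truncation window, where the lower bound on `w` gives `1 - c k ≤ ε/(2‖R‖₁)`, so these lags
contribute at most `ε/2` as well.
-/

/-- The spectral norm (largest singular value): the operator norm of a matrix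
acting between Euclidean spaces. -/
noncomputable def spec2 {𝕜 m n : Type*} [RCLike 𝕜] [Fintype m] [Fintype n] [DecidableEq n]
    (M : Matrix m n 𝕜) : ℝ :=
  letI := Matrix.instL2OpNormedAddCommGroup (𝕜 := 𝕜) (m := m) (n := n)
  ‖M‖

/-- The spectral density `Φ(s) = Σ_{k∈ℤ} e^{−j2πsk} R[k]`. -/
noncomputable def Phi {n : ℕ} (R : ℤ → Matrix (Fin n) (Fin n) ℝ) (s : ℝ) :
    Matrix (Fin n) (Fin n) ℂ :=
  ∑' k : ℤ,
    Complex.exp (-(2 * (Real.pi : ℂ) * (s : ℂ) * (k : ℂ)) * Complex.I) • (R k).map (↑· : ℝ → ℂ)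

open Matrix
open scoped Matrix.Norms.L2Operator

theorem spec2_eq_norm {m n : Type*} [Fintype m] [Fintype n] [DecidableEq n]
    {𝕜 : Type*} [RCLike 𝕜] (A : Matrix m n 𝕜) : spec2 A = ‖A‖ := rfl

theorem EuclideanSpace.norm_sq_eq_norm_re_sq_add_norm_im_sq {n : Type*} [Fintype n]
    (x : EuclideanSpace ℂ n) :
    ‖x‖ ^ 2 =
      ‖WithLp.toLp 2 (fun i => (x i).re)‖ ^ 2 + ‖WithLp.toLp 2 (fun i => (x i).im)‖ ^ 2 := by
  rw [EuclideanSpace.norm_sq_eq, EuclideanSpace.real_norm_sq_eq, EuclideanSpace.real_norm_sq_eq,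
    ← Finset.sum_add_distrib]
  refine Finset.sum_congr rfl fun i _ => ?_
  rw [Complex.sq_norm, Complex.normSq_apply, PiLp.toLp_apply, PiLp.toLp_apply, sq, sq]

theorem Matrix.l2_opNorm_map_ofReal_le {m n : Type*} [Fintype m] [Fintype n] [DecidableEq n]
    (A : Matrix m n ℝ) : ‖A.map ((↑) : ℝ → ℂ)‖ ≤ ‖A‖ := by
  rw [l2_opNorm_def]
  refine ContinuousLinearMap.opNorm_le_bound _ (norm_nonneg _) fun x => ?_
  set T := (toEuclideanLin.trans LinearMap.toContinuousLinearMap) (A.map ((↑) : ℝ → ℂ))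
  set xre : EuclideanSpace ℝ n := WithLp.toLp 2 fun i => (x i).re
  set xim : EuclideanSpace ℝ n := WithLp.toLp 2 fun i => (x i).im
  have hre : WithLp.toLp 2 (fun i => (T x i).re) = (EuclideanSpace.equiv m ℝ).symm (A *ᵥ xre) := by
    ext i
    simp [T, xre, mulVec, dotProduct, Complex.re_sum]
  have him : WithLp.toLp 2 (fun i => (T x i).im) = (EuclideanSpace.equiv m ℝ).symm (A *ᵥ xim) := by
    ext i
    simp [T, xim, mulVec, dotProduct, Complex.im_sum]
  refine (sq_le_sq₀ (norm_nonneg _) (by positivity)).mp ?_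
  calc ‖T x‖ ^ 2 = ‖(EuclideanSpace.equiv m ℝ).symm (A *ᵥ xre)‖ ^ 2
        + ‖(EuclideanSpace.equiv m ℝ).symm (A *ᵥ xim)‖ ^ 2 := by
        rw [EuclideanSpace.norm_sq_eq_norm_re_sq_add_norm_im_sq, hre, him]
    _ ≤ (‖A‖ * ‖xre‖) ^ 2 + (‖A‖ * ‖xim‖) ^ 2 := by
        gcongr <;> exact l2_opNorm_mulVec A _
    _ = (‖A‖ * ‖x‖) ^ 2 := by
        rw [mul_pow, mul_pow, mul_pow, EuclideanSpace.norm_sq_eq_norm_re_sq_add_norm_im_sq x]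
        ring

theorem norm_sub_smul_self_eq {E : Type*} [SeminormedAddCommGroup E] [NormedSpace ℝ E]
    {c : ℝ} (hc : c ≤ 1) (x : E) : ‖x - c • x‖ = (1 - c) * ‖x‖ := by
  rw [← norm_smul_of_nonneg (sub_nonneg.mpr hc), sub_smul, one_smul]

theorem norm_tsum_sub_sum_smul_le {ι E : Type*} [NormedAddCommGroup E] [NormedSpace ℝ E]
    [CompleteSpace E] {f : ι → E} {r : ι → ℝ} (hr : Summable r) (hfr : ∀ k, ‖f k‖ ≤ r k)
    {F : Finset ι} {c : ι → ℝ} (hc : ∀ k ∈ F, c k ∈ Set.Icc (0 : ℝ) 1)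
    {H : Set ι} (hHF : ∀ k ∉ H, k ∈ F) {δ : ℝ} (hδ : ∀ k ∉ H, 1 - c k ≤ δ) :
    ‖∑' k, f k - ∑ k ∈ F, c k • f k‖ ≤ ∑' k : H, r k + δ * ∑' k : ↥Hᶜ, r k := by
  set g := (F : Set ι).indicator fun k => c k • f k
  set b := H.indicator r + Hᶜ.indicator fun k => δ * r k
  have hg : Summable g := summable_of_ne_finset_zero fun k hk => Set.indicator_of_notMem hk _
  have hb : ∑' k, b k = ∑' k : H, r k + δ * ∑' k : ↥Hᶜ, r k := by
    simp only [b, Pi.add_apply]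
    rw [(hr.indicator _).tsum_add ((hr.mul_left δ).indicator _), ← tsum_subtype, ← tsum_subtype,
      tsum_mul_left]
  have hfgb : ∀ k, ‖f k - g k‖ ≤ b k := by
    intro k
    by_cases hkF : k ∈ F
    · have hgk : g k = c k • f k := Set.indicator_of_mem (Finset.mem_coe.mpr hkF) _
      have hck := hc k hkF
      rw [hgk, norm_sub_smul_self_eq hck.2]
      by_cases hkH : k ∈ H
      · simp only [b, Pi.add_apply, Set.indicator_of_mem hkH,
          Set.indicator_of_notMem (Set.notMem_compl_iff.mpr hkH), add_zero]
        nlinarith [hck.1, hfr k, norm_nonneg (f k)]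
      · simp only [b, Pi.add_apply, Set.indicator_of_notMem hkH,
          Set.indicator_of_mem (Set.mem_compl hkH), zero_add]
        nlinarith [hck.2, hfr k, norm_nonneg (f k), hδ k hkH]
    · have hkH : k ∈ H := by_contra fun hkH => hkF (hHF k hkH)
      simp only [g, b, Pi.add_apply, Set.indicator_of_notMem (Finset.mem_coe.not.mpr hkF),
        Set.indicator_of_mem hkH, Set.indicator_of_notMem (Set.notMem_compl_iff.mpr hkH),
        sub_zero, add_zero]
      exact hfr k
  rw [sum_eq_tsum_indicator, ← (Summable.of_norm_bounded hr hfr).tsum_sub hg, ← hb]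
  exact tsum_of_norm_bounded ((hr.indicator _).add ((hr.mul_left δ).indicator _)).hasSum hfgb

theorem Complex.norm_exp_neg_two_pi_mul_I (s : ℝ) (k : ℤ) :
    ‖Complex.exp (-(2 * (Real.pi : ℂ) * s * k) * Complex.I)‖ = 1 := by
  simp [Complex.norm_exp]

theorem one_sub_natCast_div_pos {a N : ℕ} (h : a < N) : 0 < 1 - (a : ℝ) / N :=
  sub_pos.mpr ((div_lt_one (by exact_mod_cast a.zero_le.trans_lt h)).mpr (by exact_mod_cast h))

theorem one_sub_natCast_div_mem_unitInterval {a N : ℕ} (h : a < N) :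
    1 - (a : ℝ) / N ∈ unitInterval :=
  ⟨(one_sub_natCast_div_pos h).le, by
    linarith [div_nonneg (a.cast_nonneg : (0 : ℝ) ≤ a) N.cast_nonneg]⟩

theorem bias_blackman_tukey_general {n : ℕ}
    (R : ℤ → Matrix (Fin n) (Fin n) ℝ)
    (hsum : Summable fun k : ℤ => spec2 (R k))
    (hRpos : 0 < ∑' k : ℤ, spec2 (R k))
    (M N : ℕ) (hMN : M ≤ N)
    (w : ℤ → ℝ) (hw01 : ∀ k : ℤ, w k ∈ Set.Icc (0:ℝ) 1)
    (ε : ℝ) (hε : 0 < ε) (Mhat : ℕ)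
    (hMhat : ∑' k : {k : ℤ // Mhat ≤ k.natAbs}, spec2 (R k.val) ≤ ε / 2)
    (hMMhat : M ≥ Mhat)
    (hwlarge : ∀ k : ℤ, k.natAbs < Mhat →
      w k ≥ (1 - ε / (2 * ∑' k : ℤ, spec2 (R k))) / (1 - (k.natAbs : ℝ) / N)) :
    ∀ s ∈ Set.Icc (-(1:ℝ)/2) (1/2),
      spec2 (Phi R s -
        ∑ k ∈ Finset.Icc (-(M : ℤ) + 1) ((M : ℤ) - 1),
          ((((1 - (k.natAbs : ℝ) / N) * w k : ℝ) : ℂ) *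
              Complex.exp (-(2 * (Real.pi : ℂ) * (s : ℂ) * (k : ℂ)) * Complex.I)) •
            (R k).map (↑· : ℝ → ℂ)) ≤ ε := by
  intro s _
  set S := ∑' k : ℤ, spec2 (R k)
  have hδ : 0 < ε / (2 * S) := div_pos hε (mul_pos two_pos hRpos)
  have hlag : ∀ k : ℤ, k.natAbs < Mhat → 1 - (1 - (k.natAbs : ℝ) / N) * w k ≤ ε / (2 * S) := by
    intro k hk
    have ht := one_sub_natCast_div_pos (N := N) (a := k.natAbs) (by omega)
    linarith [(div_le_iff₀ ht).mp (hwlarge k hk)]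
  have hbias := norm_tsum_sub_sum_smul_le
    (f := fun k : ℤ => Complex.exp (-(2 * (Real.pi : ℂ) * s * k) * Complex.I) •
      (R k).map (↑· : ℝ → ℂ))
    (F := Finset.Icc (-(M : ℤ) + 1) ((M : ℤ) - 1)) (c := fun k => (1 - (k.natAbs : ℝ) / N) * w k)
    (H := {k : ℤ | Mhat ≤ k.natAbs}) hsum
    (fun k => by
      rw [norm_smul, Complex.norm_exp_neg_two_pi_mul_I, one_mul]
      exact l2_opNorm_map_ofReal_le _)
    (fun k hk => unitInterval.mul_mem
      (one_sub_natCast_div_mem_unitInterval (by rw [Finset.mem_Icc] at hk; omega)) (hw01 k))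
    (fun k hk => Finset.mem_Icc.mpr (by have : k.natAbs < Mhat := not_le.mp hk; omega))
    (fun k hk => hlag k (not_le.mp hk))
  have hlow : ε / (2 * S) * ∑' k : ↥{k : ℤ | Mhat ≤ k.natAbs}ᶜ, spec2 (R k) ≤ ε / 2 :=
    calc _ ≤ ε / (2 * S) * S :=
          mul_le_mul_of_nonneg_left (hsum.tsum_subtype_le _ _ fun k => norm_nonneg _) hδ.le
      _ = ε / 2 := by field_simp
  rw [spec2_eq_norm, Phi]
  simp_rw [mul_smul, Complex.coe_smul]
  calc _ ≤ _ := hbias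
    _ ≤ ε / 2 + ε / 2 := add_le_add hMhat hlow
    _ = ε := add_halves ε

theorem bias_blackman_tukey {n : ℕ} (hn : 1 ≤ n)
    (R : ℤ → Matrix (Fin n) (Fin n) ℝ)
    (hsum : Summable fun k : ℤ => spec2 (R k))
    (hRpos : 0 < ∑' k : ℤ, spec2 (R k))
    (M N : ℕ) (hM : 1 ≤ M) (hMN : M ≤ N)
    (w : ℤ → ℝ) (hwsymm : ∀ k : ℤ, w k = w (-k)) (hw01 : ∀ k : ℤ, w k ∈ Set.Icc (0:ℝ) 1)
    (ε : ℝ) (hε : 0 < ε) (Mhat : ℕ)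
    (hMhat : ∑' k : {k : ℤ // Mhat ≤ k.natAbs}, spec2 (R k.val) ≤ ε / 2)
    (hMMhat : M ≥ Mhat)
    (hNlarge : (N : ℝ) ≥ 2 * Mhat * (∑' k : ℤ, spec2 (R k)) / ε)
    (hwlarge : ∀ k : ℤ, k.natAbs < Mhat →
      w k ≥ (1 - ε / (2 * ∑' k : ℤ, spec2 (R k))) / (1 - (k.natAbs : ℝ) / N)) :
    ∀ s ∈ Set.Icc (-(1:ℝ)/2) (1/2),
      spec2 (Phi R s -
        ∑ k ∈ Finset.Icc (-(M : ℤ) + 1) ((M : ℤ) - 1),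
          ((((1 - (k.natAbs : ℝ) / N) * w k : ℝ) : ℂ) *
              Complex.exp (-(2 * (Real.pi : ℂ) * (s : ℂ) * (k : ℂ)) * Complex.I)) •
            (R k).map (↑· : ℝ → ℂ)) ≤ ε :=
  bias_blackman_tukey_general R hsum hRpos M N hMN w hw01 ε hε Mhat hMhat hMMhat hwlarge
end

section
/- (Sub-exponential moment generating function of a centered square.) Let b > 0 and let X be a real random variable with E[X] = 0 and E[exp(X²/b²)] ≤ 2. Then for every real λ with |λ| ≤ 1/(4b²), E[ exp( λ (X² − E[X²]) ) ] ≤ exp( 16 b⁴ λ² ) (equivalently, exp((4b²)² λ²)). -/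
/-!
Put `Y = X² / b²` and `t = λ b²`, so that `Y ≥ 0`, `E[exp Y] ≤ 2` and `|t| ≤ 1/4`. The elementary
inequality `exp (t y) ≤ 1 + t y + 8 t² exp y` for `y ≥ 0`, integrated against the law of `Y`, gives
`E[exp (t Y)] ≤ 1 + t E[Y] + 16 t² ≤ exp (t E[Y] + 16 t²)`; dividing by `exp (t E[Y])` centers `Y`.
-/

open MeasureTheory Real

namespace Real

theorem exp_le_one_add_add_sq {s : ℝ} (hs : s ≤ 1) : exp s ≤ 1 + s + s ^ 2 := by
  rcases le_or_gt (-1) s with h | h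
  · have := abs_exp_sub_one_sub_id_le (abs_le.2 ⟨h, hs⟩)
    linarith [le_abs_self (exp s - 1 - s)]
  · have : exp s ≤ 1 := exp_le_one_iff.2 (by linarith)
    nlinarith

theorem sq_le_two_mul_exp {y : ℝ} (hy : 0 ≤ y) : y ^ 2 ≤ 2 * exp y := by
  linarith [quadratic_le_exp_of_nonneg hy]

theorem exp_mul_le_one_add_add_mul_exp {t y : ℝ} (hy : 0 ≤ y) (ht : |t| ≤ 1 / 4) :
    exp (t * y) ≤ 1 + t * y + 8 * t ^ 2 * exp y := by
  rcases le_or_gt (t * y) 1 with hs | hs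
  · calc exp (t * y) ≤ 1 + t * y + t ^ 2 * y ^ 2 := by
          simpa only [mul_pow] using exp_le_one_add_add_sq hs
      _ ≤ 1 + t * y + t ^ 2 * (2 * exp y) := by gcongr; exact sq_le_two_mul_exp hy
      _ ≤ 1 + t * y + 8 * t ^ 2 * exp y := by nlinarith [exp_pos y, sq_nonneg t]
  · -- Here `0 < t ≤ 1/4`, so `exp (t y) ≤ exp (y / 4)` and the factor `exp (3 y / 4)` of `exp y`
    -- absorbs `y²`.
    have ht0 : 0 < t := by
      by_contra! h
      nlinarith
    have hty : t * y ≤ y / 4 := by nlinarith [(abs_le.1 ht).2]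
    have hy2 : y ^ 2 ≤ 8 * exp (3 * y / 4) := by
      nlinarith [sq_le_two_mul_exp (by positivity : 0 ≤ 3 * y / 4)]
    calc exp (t * y) ≤ exp (y / 4) := exp_le_exp.2 hty
      _ ≤ (t * y) ^ 2 * exp (y / 4) := le_mul_of_one_le_left (exp_pos _).le (by nlinarith)
      _ = t ^ 2 * (y ^ 2 * exp (y / 4)) := by ring
      _ ≤ t ^ 2 * (8 * exp (3 * y / 4) * exp (y / 4)) := by gcongr
      _ = 8 * t ^ 2 * exp y := by rw [mul_assoc 8, ← exp_add]; ring_nf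
      _ ≤ 1 + t * y + 8 * t ^ 2 * exp y := by linarith

end Real

section

variable {Ω : Type*} [MeasurableSpace Ω] {P : Measure Ω}

theorem integrable_and_integral_le_of_lintegral_ofReal_le {f : Ω → ℝ}
    (hfm : AEStronglyMeasurable f P) (hf : 0 ≤ᵐ[P] f) {c : ℝ} (hc : 0 ≤ c)
    (h : ∫⁻ ω, ENNReal.ofReal (f ω) ∂P ≤ ENNReal.ofReal c) :
    Integrable f P ∧ ∫ ω, f ω ∂P ≤ c :=
  ⟨(lintegral_ofReal_ne_top_iff_integrable hfm hf).1 (ne_top_of_le_ne_top ENNReal.ofReal_ne_top h),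
    (integral_eq_lintegral_of_nonneg_ae hf hfm).trans_le (ENNReal.toReal_le_of_le_ofReal hc h)⟩

theorem integrable_of_integrable_exp {Y : Ω → ℝ} (hY : AEStronglyMeasurable Y P)
    (hY0 : ∀ ω, 0 ≤ Y ω) (hexp : Integrable (fun ω ↦ exp (Y ω)) P) : Integrable Y P :=
  hexp.mono' hY <| ae_of_all _ fun ω ↦ by
    rw [norm_of_nonneg (hY0 ω)]
    linarith [add_one_le_exp (Y ω)]

variable [IsProbabilityMeasure P] {Y : Ω → ℝ}

theorem integral_exp_mul_le (hY : Measurable Y) (hY0 : ∀ ω, 0 ≤ Y ω)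
    (hexp : Integrable (fun ω ↦ exp (Y ω)) P) {t : ℝ} (ht : |t| ≤ 1 / 4) :
    Integrable (fun ω ↦ exp (t * Y ω)) P ∧
      ∫ ω, exp (t * Y ω) ∂P ≤ 1 + t * ∫ ω, Y ω ∂P + 8 * t ^ 2 * ∫ ω, exp (Y ω) ∂P := by
  have hYint := integrable_of_integrable_exp hY.aestronglyMeasurable hY0 hexp
  have hlin : Integrable (fun ω ↦ 1 + t * Y ω) P := (integrable_const 1).add (hYint.const_mul t)
  have hbound : Integrable (fun ω ↦ 1 + t * Y ω + 8 * t ^ 2 * exp (Y ω)) P :=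
    hlin.add (hexp.const_mul _)
  have hle ω : exp (t * Y ω) ≤ 1 + t * Y ω + 8 * t ^ 2 * exp (Y ω) :=
    exp_mul_le_one_add_add_mul_exp (hY0 ω) ht
  have hint : Integrable (fun ω ↦ exp (t * Y ω)) P :=
    hbound.mono' (by fun_prop) <| ae_of_all _ fun ω ↦ by
      rw [norm_of_nonneg (exp_pos _).le]
      exact hle ω
  refine ⟨hint, (integral_mono hint hbound hle).trans_eq ?_⟩
  rw [integral_add hlin (hexp.const_mul _),
    integral_add (integrable_const 1) (hYint.const_mul t), integral_const, integral_const_mul,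
    integral_const_mul]
  simp

theorem integral_exp_mul_sub_integral_le (hY : Measurable Y) (hY0 : ∀ ω, 0 ≤ Y ω)
    (hexp : Integrable (fun ω ↦ exp (Y ω)) P) {K : ℝ} (hK : ∫ ω, exp (Y ω) ∂P ≤ K) {t : ℝ}
    (ht : |t| ≤ 1 / 4) :
    Integrable (fun ω ↦ exp (t * (Y ω - ∫ ω', Y ω' ∂P))) P ∧
      ∫ ω, exp (t * (Y ω - ∫ ω', Y ω' ∂P)) ∂P ≤ exp (8 * K * t ^ 2) := by
  set m := ∫ ω', Y ω' ∂P
  obtain ⟨hint, hle⟩ := integral_exp_mul_le hY hY0 hexp ht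
  have hfactor : (fun ω ↦ exp (t * (Y ω - m))) = fun ω ↦ exp (-(t * m)) * exp (t * Y ω) := by
    ext ω
    rw [← exp_add]
    ring_nf
  rw [hfactor, integral_const_mul]
  refine ⟨hint.const_mul _, ?_⟩
  calc exp (-(t * m)) * ∫ ω, exp (t * Y ω) ∂P ≤ exp (-(t * m)) * (1 + t * m + 8 * K * t ^ 2) := by
        gcongr
        nlinarith [sq_nonneg t]
    _ ≤ exp (-(t * m)) * exp (t * m + 8 * K * t ^ 2) := by
        gcongr
        linarith [add_one_le_exp (t * m + 8 * K * t ^ 2)]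
    _ = exp (8 * K * t ^ 2) := by rw [← exp_add]; ring_nf

end

open MeasureTheory in
theorem centered_square_mgf_general
    {Ω : Type*} [MeasurableSpace Ω] (P : Measure Ω) [IsProbabilityMeasure P]
    (b : ℝ) (hb : 0 < b) (X : Ω → ℝ) (hmeas : Measurable X)
    (hpsi2 : ∫⁻ ω, ENNReal.ofReal (Real.exp (X ω ^ 2 / b ^ 2)) ∂P ≤ 2)
    (lam : ℝ) (hlam : |lam| ≤ 1 / (4 * b ^ 2)) :
    ∫⁻ ω, ENNReal.ofReal (Real.exp (lam * (X ω ^ 2 - ∫ ω', X ω' ^ 2 ∂P))) ∂P ≤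
      ENNReal.ofReal (Real.exp (16 * b ^ 4 * lam ^ 2)) := by
  have hb2 : 0 < b ^ 2 := by positivity
  obtain ⟨hexp, hK⟩ := integrable_and_integral_le_of_lintegral_ofReal_le (P := P) (by fun_prop)
    (ae_of_all _ fun ω ↦ (exp_pos (X ω ^ 2 / b ^ 2)).le) zero_le_two
    (by simpa using hpsi2)
  have ht : |lam * b ^ 2| ≤ 1 / 4 := by
    rw [abs_mul, abs_of_pos hb2]
    calc |lam| * b ^ 2 ≤ 1 / (4 * b ^ 2) * b ^ 2 := by gcongr
      _ = 1 / 4 := by field_simp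
  obtain ⟨hint, hle⟩ := integral_exp_mul_sub_integral_le (by fun_prop)
    (fun ω ↦ by positivity) hexp hK ht
  have hrescale ω : lam * (X ω ^ 2 - ∫ ω', X ω' ^ 2 ∂P) =
      lam * b ^ 2 * (X ω ^ 2 / b ^ 2 - ∫ ω', X ω' ^ 2 / b ^ 2 ∂P) := by
    rw [integral_div]
    field_simp
  simp_rw [hrescale]
  rw [← ofReal_integral_eq_lintegral_ofReal hint (ae_of_all _ fun ω ↦ (exp_pos _).le)]
  exact ENNReal.ofReal_le_ofReal (hle.trans_eq (by ring_nf))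

open MeasureTheory in
theorem centered_square_mgf
    {Ω : Type*} [MeasurableSpace Ω] (P : Measure Ω) [IsProbabilityMeasure P]
    (b : ℝ) (hb : 0 < b) (X : Ω → ℝ) (hmeas : Measurable X)
    (hmean : ∫ ω, X ω ∂P = 0)
    (hpsi2 : ∫⁻ ω, ENNReal.ofReal (Real.exp (X ω ^ 2 / b ^ 2)) ∂P ≤ 2)
    (lam : ℝ) (hlam : |lam| ≤ 1 / (4 * b ^ 2)) :
    ∫⁻ ω, ENNReal.ofReal (Real.exp (lam * (X ω ^ 2 - ∫ ω', X ω' ^ 2 ∂P))) ∂P ≤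
      ENNReal.ofReal (Real.exp (16 * b ^ 4 * lam ^ 2)) :=
  centered_square_mgf_general P b hb X hmeas hpsi2 lam hlam
end
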